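/- arXiv:1902.09999 — 3 statements merged into one kernel-verified Lean document; each statement's English description precedes it below -/
import Mathlib

section
/- Let k > 0, q_f > 0 and q_c be real numbers with q_f + k − q_c > 0. Let σ_f and σ_n be 1×2 real row vectors, σ_u = σ_n − σ_f, and let Σ be the 2×2 real matrix whose first row is σ_u and whose second row is σ_n. Let Θ = [[q_f, −q_c], [q_f, k − q_c]] and define the symmetric 2×2 matrix ρ by ρ₁₁ = ((kσ_u + q_c σ_f)(kσ_u + q_c σ_f)ᵀ + q_f·k·σ_u σ_uᵀ)/(2 q_f k (q_f + k − q_c)), ρ₁₂ = ρ₂₁ = ((q_c − k)·σ_f σ_fᵀ + k·σ_n σ_nᵀ)/(2k(q_f + k − q_c)), ρ₂₂ = (q_f·σ_f σ_fᵀ + k·σ_n σ_nᵀ)/(2k(q_f + k − q_c)). Then Θρ + ρΘᵀ = ΣΣᵀ. -/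
/-!
Both sides of the Lyapunov equation are symmetric `2 × 2` matrices whose entries depend on the
volatility rows `σ_f`, `σ_n` only through their Gram entries `σ_f ⬝ σ_f`, `σ_f ⬝ σ_n`, `σ_n ⬝ σ_n`.
Expanding the entries bilinearly reduces the matrix equation to three rational identities in
these Gram entries, which clear denominators because `k`, `q_f` and `q_f + k - q_c` are nonzero.
-/

open Matrix

namespace Matrix

theorem transpose_fin_two {α : Type*} (a b c d : α) : !![a, b; c, d]ᵀ = !![a, c; b, d] :=
  (eta_fin_two _).trans rfl

theorem mul_transpose_apply {l m n R : Type*} [Fintype n] [CommRing R]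
    (u : Matrix l n R) (v : Matrix m n R) (i : l) (j : m) :
    (u * vᵀ) i j = u i ⬝ᵥ v j :=
  mul_apply' ..

variable {R : Type*} [CommRing R]

theorem mul_add_mul_transpose_fin_two (a b c d x y z : R) :
    !![a, b; c, d] * !![x, y; y, z] + !![x, y; y, z] * !![a, b; c, d]ᵀ =
      !![2 * (a * x + b * y), a * y + b * z + c * x + d * y;
         a * y + b * z + c * x + d * y, 2 * (c * y + d * z)] := by
  rw [transpose_fin_two, mul_fin_two, mul_fin_two]
  ext i j
  fin_cases i <;> fin_cases j <;> simp <;> ring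

theorem mul_transpose_self_fin_two (u v : Fin 2 → R) :
    !![u 0, u 1; v 0, v 1] * !![u 0, u 1; v 0, v 1]ᵀ = !![u ⬝ᵥ u, u ⬝ᵥ v; v ⬝ᵥ u, v ⬝ᵥ v] := by
  simp only [transpose_fin_two, mul_fin_two, dotProduct, Fin.sum_univ_two]

end Matrix

/-- Proposition 2 (algebraic core): the claimed asymptotic covariance matrix `ρ` of the
stationary Ornstein–Uhlenbeck process `dX = −ΘX dt + Σ dW` solves the Lyapunov equation
`Θρ + ρΘᵀ = ΣΣᵀ`. -/
theorem stmt_4 (k q_f q_c : ℝ) (hk : 0 < k) (hqf : 0 < q_f)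
    (hstab : 0 < q_f + k - q_c)
    (σ_f σ_n : Matrix (Fin 1) (Fin 2) ℝ) :
    let σ_u : Matrix (Fin 1) (Fin 2) ℝ := σ_n - σ_f
    let Θ : Matrix (Fin 2) (Fin 2) ℝ := !![q_f, -q_c; q_f, k - q_c]
    let Sg : Matrix (Fin 2) (Fin 2) ℝ :=
      !![σ_u 0 0, σ_u 0 1; σ_n 0 0, σ_n 0 1]
    let ρ11 : ℝ :=
      (((k • σ_u + q_c • σ_f) * (k • σ_u + q_c • σ_f)ᵀ) 0 0
          + q_f * k * ((σ_u * σ_uᵀ) 0 0)) / (2 * q_f * k * (q_f + k - q_c))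
    let ρ12 : ℝ :=
      ((q_c - k) * ((σ_f * σ_fᵀ) 0 0) + k * ((σ_n * σ_nᵀ) 0 0))
        / (2 * k * (q_f + k - q_c))
    let ρ22 : ℝ :=
      (q_f * ((σ_f * σ_fᵀ) 0 0) + k * ((σ_n * σ_nᵀ) 0 0))
        / (2 * k * (q_f + k - q_c))
    let ρ : Matrix (Fin 2) (Fin 2) ℝ := !![ρ11, ρ12; ρ12, ρ22]
    Θ * ρ + ρ * Θᵀ = Sg * Sgᵀ := by
  intro σ_u Θ Sg ρ11 ρ12 ρ22 ρ
  have hu : σ_u 0 = σ_n 0 - σ_f 0 := rfl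
  have hw : (k • σ_u + q_c • σ_f) 0 = k • (σ_n 0 - σ_f 0) + q_c • σ_f 0 := rfl
  simp only [Θ, ρ, Sg, ρ11, ρ12, ρ22, mul_add_mul_transpose_fin_two, mul_transpose_self_fin_two,
    mul_transpose_apply, hu, hw, dotProduct_add, add_dotProduct, dotProduct_sub, sub_dotProduct,
    dotProduct_smul, smul_dotProduct, smul_eq_mul, dotProduct_comm (σ_n 0)]
  generalize σ_f 0 ⬝ᵥ σ_f 0 = F, σ_f 0 ⬝ᵥ σ_n 0 = C, σ_n 0 ⬝ᵥ σ_n 0 = N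
  refine congrArg of (vec2_eq (vec2_eq ?_ ?_) (vec2_eq ?_ ?_)) <;> field_simp <;> ring
end

section
/- Let k > 0 and q_c ≥ 0 be real numbers, and let A ≥ 0 and B > 0 be real numbers. Define V_u(q_f) = (A + B·q_f)/(2·q_f·k·(q_f + k − q_c)). Then for all real q_f1, q_f2 with 0 < q_f1 < q_f2 and q_f1 + k − q_c > 0, we have V_u(q_f2) < V_u(q_f1). In particular, taking A = (kσ_u + q_c σ_f)(kσ_u + q_c σ_f)ᵀ and B = k·σ_u σ_uᵀ for 1×2 real row vectors σ_f, σ_n with σ_u = σ_n − σ_f ≠ 0, the asymptotic variance of price dislocation V_u(q_f) = ((kσ_u + q_cσ_f)(kσ_u + q_cσ_f)ᵀ + q_f k σ_uσ_uᵀ)/(2 q_f k (q_f + k − q_c)) is strictly decreasing in q_f on this region. -/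
/-!
Cross-multiplying, with `d = k − q_c`,
`(A + B q₁) · 2q₂k(q₂ + d) − (A + B q₂) · 2q₁k(q₁ + d) = 2k (q₂ − q₁) (A (q₁ + q₂ + d) + B q₁ q₂)`,
which is positive for `0 < q₁ < q₂`, `q₁ + d > 0`, `A ≥ 0` and `B > 0`. For the matrix instance,
`A` and `B / k` are squared Euclidean norms of row vectors, hence nonnegative, and positive for
`σ_u ≠ 0`.
-/

open Matrix

theorem Matrix.mul_transpose_self_apply_self {m n R : Type*} [Fintype n] [Mul R]
    [AddCommMonoid R] (M : Matrix m n R) (i : m) : (M * Mᵀ) i i = M i ⬝ᵥ M i :=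
  rfl

section GramDiagonal

variable {m n R : Type*} [Fintype n] [Ring R] [LinearOrder R] [IsStrictOrderedRing R]

theorem Matrix.mul_transpose_self_apply_self_nonneg (M : Matrix m n R) (i : m) :
    0 ≤ (M * Mᵀ) i i :=
  Finset.sum_nonneg fun j _ => mul_self_nonneg (M i j)

theorem Matrix.mul_transpose_self_apply_self_pos_iff (M : Matrix m n R) (i : m) :
    0 < (M * Mᵀ) i i ↔ M i ≠ 0 := by
  rw [(mul_transpose_self_apply_self_nonneg M i).lt_iff_ne', mul_transpose_self_apply_self,
    Ne, dotProduct_self_eq_zero]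

theorem Matrix.mul_transpose_self_apply_pos_of_ne_zero [Unique m] {M : Matrix m n R}
    (hM : M ≠ 0) (i : m) : 0 < (M * Mᵀ) i i := by
  rw [mul_transpose_self_apply_self_pos_iff]
  exact fun hi => hM (funext fun i' => Subsingleton.elim i' i ▸ hi)

end GramDiagonal

theorem strictAntiOn_asymptoticVariance {k q_c A B : ℝ} (hk : 0 < k) (hA : 0 ≤ A) (hB : 0 < B) :
    StrictAntiOn (fun q => (A + B * q) / (2 * q * k * (q + k - q_c)))
      {q | 0 < q ∧ 0 < q + k - q_c} := by
  rintro q₁ ⟨hq₁, hs₁⟩ q₂ ⟨hq₂, hs₂⟩ hlt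
  have hd₁ : 0 < 2 * q₁ * k * (q₁ + k - q_c) := by positivity
  have hd₂ : 0 < 2 * q₂ * k * (q₂ + k - q_c) := by positivity
  rw [div_lt_div_iff₀ hd₂ hd₁, ← sub_pos]
  have cross_difference : (A + B * q₁) * (2 * q₂ * k * (q₂ + k - q_c))
      - (A + B * q₂) * (2 * q₁ * k * (q₁ + k - q_c))
      = 2 * k * (q₂ - q₁) * (A * (q₁ + q₂ + k - q_c) + B * q₁ * q₂) := by ring
  have hgap : 0 < q₂ - q₁ := sub_pos.mpr hlt
  have hsum : 0 < q₁ + q₂ + k - q_c := by linarith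
  rw [cross_difference]
  positivity

theorem stmt_13_general (k q_c : ℝ) (hk : 0 < k) :
    (∀ A B : ℝ, 0 ≤ A → 0 < B →
      ∀ q_f1 q_f2 : ℝ, 0 < q_f1 → q_f1 < q_f2 → 0 < q_f1 + k - q_c →
        (A + B * q_f2) / (2 * q_f2 * k * (q_f2 + k - q_c))
          < (A + B * q_f1) / (2 * q_f1 * k * (q_f1 + k - q_c))) ∧
    (∀ σ_f σ_n : Matrix (Fin 1) (Fin 2) ℝ, σ_n - σ_f ≠ 0 →
      ∀ q_f1 q_f2 : ℝ, 0 < q_f1 → q_f1 < q_f2 → 0 < q_f1 + k - q_c →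
        (((k • (σ_n - σ_f) + q_c • σ_f) * (k • (σ_n - σ_f) + q_c • σ_f)ᵀ) 0 0
            + q_f2 * k * (((σ_n - σ_f) * (σ_n - σ_f)ᵀ) 0 0))
            / (2 * q_f2 * k * (q_f2 + k - q_c))
          < (((k • (σ_n - σ_f) + q_c • σ_f) * (k • (σ_n - σ_f) + q_c • σ_f)ᵀ) 0 0
            + q_f1 * k * (((σ_n - σ_f) * (σ_n - σ_f)ᵀ) 0 0))
            / (2 * q_f1 * k * (q_f1 + k - q_c))) := by
  have decreasing : ∀ A B : ℝ, 0 ≤ A → 0 < B →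
      ∀ q_f1 q_f2 : ℝ, 0 < q_f1 → q_f1 < q_f2 → 0 < q_f1 + k - q_c →
        (A + B * q_f2) / (2 * q_f2 * k * (q_f2 + k - q_c))
          < (A + B * q_f1) / (2 * q_f1 * k * (q_f1 + k - q_c)) :=
    fun A B hA hB q₁ q₂ hq₁ hlt hs₁ =>
      strictAntiOn_asymptoticVariance hk hA hB ⟨hq₁, hs₁⟩ ⟨hq₁.trans hlt, by linarith⟩ hlt
  refine ⟨decreasing, fun σ_f σ_n hσ_u q₁ q₂ hq₁ hlt hs₁ => ?_⟩
  have h := decreasing _ (k * ((σ_n - σ_f) * (σ_n - σ_f)ᵀ) 0 0)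
    (mul_transpose_self_apply_self_nonneg (k • (σ_n - σ_f) + q_c • σ_f) 0)
    (mul_pos hk (mul_transpose_self_apply_pos_of_ne_zero hσ_u 0)) q₁ q₂ hq₁ hlt hs₁
  convert h using 3 <;> ring

/-- The asymptotic variance of price dislocation
`V_u(q_f) = (A + B q_f)/(2 q_f k (q_f + k − q_c))` is strictly decreasing in the
fundamentalists' strength `q_f` (on the stability region), in general for `A ≥ 0`,
`B > 0`, and in particular for `A = (kσ_u + q_cσ_f)(kσ_u + q_cσ_f)ᵀ`,
`B = k σ_u σ_uᵀ` with `σ_u = σ_n − σ_f ≠ 0`. -/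
theorem stmt_13 (k q_c : ℝ) (hk : 0 < k) (hqc : 0 ≤ q_c) :
    (∀ A B : ℝ, 0 ≤ A → 0 < B →
      ∀ q_f1 q_f2 : ℝ, 0 < q_f1 → q_f1 < q_f2 → 0 < q_f1 + k - q_c →
        (A + B * q_f2) / (2 * q_f2 * k * (q_f2 + k - q_c))
          < (A + B * q_f1) / (2 * q_f1 * k * (q_f1 + k - q_c))) ∧
    (∀ σ_f σ_n : Matrix (Fin 1) (Fin 2) ℝ, σ_n - σ_f ≠ 0 →
      ∀ q_f1 q_f2 : ℝ, 0 < q_f1 → q_f1 < q_f2 → 0 < q_f1 + k - q_c →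
        (((k • (σ_n - σ_f) + q_c • σ_f) * (k • (σ_n - σ_f) + q_c • σ_f)ᵀ) 0 0
            + q_f2 * k * (((σ_n - σ_f) * (σ_n - σ_f)ᵀ) 0 0))
            / (2 * q_f2 * k * (q_f2 + k - q_c))
          < (((k • (σ_n - σ_f) + q_c • σ_f) * (k • (σ_n - σ_f) + q_c • σ_f)ᵀ) 0 0
            + q_f1 * k * (((σ_n - σ_f) * (σ_n - σ_f)ᵀ) 0 0))
            / (2 * q_f1 * k * (q_f1 + k - q_c))) :=
  stmt_13_general k q_c hk
end

section
/- Let k > 0 and q_f > 0 be real numbers, and let σ_f, σ_n be 1×2 real row vectors with σ_u = σ_n − σ_f satisfying σ_u σ_uᵀ > 0 and σ_u σ_fᵀ ≥ 0. Define V_u(q_c) = ((kσ_u + q_cσ_f)(kσ_u + q_cσ_f)ᵀ + q_f·k·σ_uσ_uᵀ)/(2·q_f·k·(q_f + k − q_c)). Then for all real q_c1, q_c2 with 0 ≤ q_c1 < q_c2 < q_f + k, we have V_u(q_c1) < V_u(q_c2). -/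
/-!
With `u = σ_u` and `f = σ_f`, the numerator of `V_u(q_c)` is
`k²|u|² + 2k q_c (u·f) + q_c²|f|² + q_f k |u|²`, and each term is nondecreasing in `q_c ≥ 0`
because `u·f ≥ 0`; it is positive because `|u|² > 0`. The denominator `2 q_f k (q_f + k − q_c)` is
positive and strictly decreasing on `q_c < q_f + k`.
-/

open Matrix

lemma mul_transpose_apply_eq_dotProduct {m n α : Type*} [Fintype n] [Mul α] [AddCommMonoid α]
    (A B : Matrix m n α) (i j : m) : (A * Bᵀ) i j = A i ⬝ᵥ B j :=
  mul_apply'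

section DotProduct

variable {n R : Type*} [Fintype n] [CommRing R]

lemma dotProduct_self_nonneg [LinearOrder R] [IsStrictOrderedRing R] (v : n → R) :
    0 ≤ v ⬝ᵥ v :=
  Fintype.sum_nonneg fun _ => mul_self_nonneg _

lemma dotProduct_smul_add_smul_self (k q : R) (u f : n → R) :
    (k • u + q • f) ⬝ᵥ (k • u + q • f)
      = k ^ 2 * (u ⬝ᵥ u) + 2 * k * q * (u ⬝ᵥ f) + q ^ 2 * (f ⬝ᵥ f) := by
  simp only [add_dotProduct, dotProduct_add, smul_dotProduct, dotProduct_smul, smul_eq_mul,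
    dotProduct_comm f u]
  ring

lemma dotProduct_smul_add_smul_self_mono [LinearOrder R] [IsStrictOrderedRing R]
    {k q₁ q₂ : R} {u f : n → R} (hk : 0 ≤ k) (huf : 0 ≤ u ⬝ᵥ f) (hq₁ : 0 ≤ q₁) (hq : q₁ ≤ q₂) :
    (k • u + q₁ • f) ⬝ᵥ (k • u + q₁ • f) ≤ (k • u + q₂ • f) ⬝ᵥ (k • u + q₂ • f) := by
  rw [dotProduct_smul_add_smul_self, dotProduct_smul_add_smul_self]
  have hff := dotProduct_self_nonneg f
  gcongr

end DotProduct

/-- The asymptotic variance of price dislocation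
`V_u(q_c) = ((kσ_u + q_cσ_f)(kσ_u + q_cσ_f)ᵀ + q_f k σ_uσ_uᵀ)/(2 q_f k (q_f + k − q_c))`
is strictly increasing in the chartists' strength `q_c` on `[0, q_f + k)`,
provided `σ_u σ_uᵀ > 0` and `σ_u σ_fᵀ ≥ 0`. -/
theorem stmt_15 (k q_f : ℝ) (hk : 0 < k) (hqf : 0 < q_f)
    (σ_f σ_n : Matrix (Fin 1) (Fin 2) ℝ)
    (huu : 0 < (((σ_n - σ_f) * (σ_n - σ_f)ᵀ) 0 0))
    (huf : 0 ≤ (((σ_n - σ_f) * σ_fᵀ) 0 0)) :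
    ∀ q_c1 q_c2 : ℝ, 0 ≤ q_c1 → q_c1 < q_c2 → q_c2 < q_f + k →
      (((k • (σ_n - σ_f) + q_c1 • σ_f) * (k • (σ_n - σ_f) + q_c1 • σ_f)ᵀ) 0 0
          + q_f * k * (((σ_n - σ_f) * (σ_n - σ_f)ᵀ) 0 0))
          / (2 * q_f * k * (q_f + k - q_c1))
        < (((k • (σ_n - σ_f) + q_c2 • σ_f) * (k • (σ_n - σ_f) + q_c2 • σ_f)ᵀ) 0 0
          + q_f * k * (((σ_n - σ_f) * (σ_n - σ_f)ᵀ) 0 0))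
          / (2 * q_f * k * (q_f + k - q_c2)) := by
  intro q₁ q₂ hq₁ hq hq₂
  simp only [mul_transpose_apply_eq_dotProduct] at huu huf ⊢
  set u := (σ_n - σ_f) 0
  have hrow (q : ℝ) : (k • (σ_n - σ_f) + q • σ_f) 0 = k • u + q • σ_f 0 := rfl
  rw [hrow, hrow]
  have hmono := dotProduct_smul_add_smul_self_mono hk.le huf hq₁ hq.le
  have hnorm₂ := dotProduct_self_nonneg (k • u + q₂ • σ_f 0)
  have hgap : 0 < q_f + k - q₂ := by linarith
  apply div_lt_div₀' (by linarith) (by gcongr) (by positivity) (by positivity)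
end
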